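/- (Generating function for generalized Hahn polynomials) For |yt| < 1, ∑_{n=0}^∞ h_n(x,y,a,b|q) t^n/(q;q)_n = ((xt;q)_∞/(yt;q)_∞) · ₁Φ₁(a; 0; q, bt), where h_n(x,y,a,b|q) := ∑_{k=0}^n \binom{n}{k}_q (−1)^k q^{\binom{k}{2}} b^k (a;q)_k p_{n−k}(y,x), p_m(y,x) := ∏_{j=0}^{m−1}(y − q^j x), and ₁Φ₁(a;0;q,z) := ∑_{m=0}^∞ (−1)^m q^{\binom{m}{2}} (a;q)_m z^m/(q;q)_m. -/

import Mathlib

open Finset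

noncomputable def qPoch (q a : ℂ) (n : ℕ) : ℂ := ∏ j ∈ Finset.range n, (1 - a * q ^ j)

noncomputable def qPochInf (q a : ℂ) : ℂ := ∏' j : ℕ, (1 - a * q ^ j)

noncomputable def cauchyP (q x y : ℂ) (n : ℕ) : ℂ := ∏ j ∈ Finset.range n, (x - q ^ j * y)

noncomputable def qBinom (q : ℂ) (n k : ℕ) : ℂ := qPoch q q n / (qPoch q q k * qPoch q q (n - k))

noncomputable def qDeriv (q : ℂ) (f : ℂ → ℂ) : ℂ → ℂ := fun x => (f x - f (q * x)) / x

noncomputable def qTheta (q : ℂ) (f : ℂ → ℂ → ℂ) : ℂ → ℂ → ℂ :=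
  fun x y => (f (q⁻¹ * x) y - f x (q * y)) / (q⁻¹ * x - y)

/-- `₁Φ₁(a; 0; q, z)` -/
noncomputable def phi11 (q a z : ℂ) : ℂ :=
  ∑' m : ℕ, (-1) ^ m * q ^ m.choose 2 * qPoch q a m * z ^ m / qPoch q q m

/-- generalized Cauchy polynomials `p_n(x,y,a)` -/
noncomputable def genCauchy (q a x y : ℂ) (n : ℕ) : ℂ :=
  ∑ k ∈ Finset.range (n + 1),
    qBinom q n k * (-1) ^ k * q ^ k.choose 2 * qPoch q a k * x ^ (n - k) * y ^ k

/-- generalized Hahn polynomials `h_n(x,y,a,b|q)` -/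
noncomputable def hahn (q x y a b : ℂ) (n : ℕ) : ℂ :=
  ∑ k ∈ Finset.range (n + 1),
    qBinom q n k * (-1) ^ k * q ^ k.choose 2 * b ^ k * qPoch q a k * cauchyP q y x (n - k)

/-!
Multiplying by `t ^ n / (q;q)_n` splits the `q`-binomial coefficient in `h_n`, so the series is
the Cauchy product of the `₁Φ₁` series in `bt` with `S(t) = ∑ p_m(y,x) t^m/(q;q)_m`; both converge
absolutely by the ratio test. The value of `S` is Cauchy's `q`-binomial theorem: comparing
coefficients gives `(1 - yu) S(u) = (1 - xu) S(qu)`, hence `(yt;q)_N S(t) = (xt;q)_N S(q^N t)`,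
and `S(q^N t) → S(0) = 1` as `N → ∞`.
-/

open Filter Topology

lemma summable_norm_of_succ_eq_mul {R : Type*} [SeminormedRing R] {f r : ℕ → R} {L : R}
    (hL : ‖L‖ < 1) (hr : Tendsto r atTop (𝓝 L)) (hf : ∀ n, f (n + 1) = r n * f n) :
    Summable (‖f ·‖) := by
  obtain ⟨ρ, hLρ, hρ1⟩ := exists_between hL
  refine summable_of_ratio_norm_eventually_le hρ1 ?_
  filter_upwards [hr.norm.eventually_le_const hLρ] with n hn
  rw [norm_norm, norm_norm, hf]
  exact (norm_mul_le _ _).trans (mul_le_mul_of_nonneg_right hn (norm_nonneg _))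

noncomputable def phi11Term (q a z : ℂ) (m : ℕ) : ℂ :=
  (-1) ^ m * q ^ m.choose 2 * qPoch q a m * z ^ m / qPoch q q m

noncomputable def cauchyTerm (q x y u : ℂ) (m : ℕ) : ℂ := cauchyP q x y m * u ^ m / qPoch q q m

noncomputable def cauchySeries (q x y u : ℂ) : ℂ := ∑' m, cauchyTerm q x y u m

lemma qPoch_succ (q z : ℂ) (n : ℕ) : qPoch q z (n + 1) = qPoch q z n * (1 - z * q ^ n) :=
  prod_range_succ _ _

lemma cauchyP_succ (q x y : ℂ) (n : ℕ) :
    cauchyP q x y (n + 1) = cauchyP q x y n * (x - q ^ n * y) :=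
  prod_range_succ _ _

section
variable {q : ℂ}

lemma one_sub_mul_pow_ne_zero {z : ℂ} (hz : ‖z‖ < 1) (hq : ‖q‖ ≤ 1) (j : ℕ) :
    1 - z * q ^ j ≠ 0 := by
  refine sub_ne_zero.mpr fun h => ?_
  have : ‖z * q ^ j‖ < 1 := by
    rw [norm_mul, norm_pow]
    exact mul_lt_one_of_nonneg_of_lt_one_left (norm_nonneg _) hz
      (pow_le_one₀ (norm_nonneg _) hq)
  rw [← h, norm_one] at this
  exact lt_irrefl _ this

lemma qPoch_ne_zero {z : ℂ} (hz : ‖z‖ < 1) (hq : ‖q‖ ≤ 1) (n : ℕ) : qPoch q z n ≠ 0 :=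
  prod_ne_zero_iff.mpr fun j _ => one_sub_mul_pow_ne_zero hz hq j

lemma summable_norm_neg_mul_pow (hq : ‖q‖ < 1) (z : ℂ) : Summable fun j => ‖-(z * q ^ j)‖ := by
  simpa [norm_pow] using (summable_geometric_of_lt_one (norm_nonneg _) hq).mul_left ‖z‖

lemma tendsto_qPoch (hq : ‖q‖ < 1) (z : ℂ) :
    Tendsto (qPoch q z) atTop (𝓝 (qPochInf q z)) := by
  have := (multipliable_one_add_of_summable (summable_norm_neg_mul_pow hq z)).hasProd
  simp only [← sub_eq_add_neg] at this
  exact this.tendsto_prod_nat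

lemma qPochInf_ne_zero (hq : ‖q‖ < 1) {z : ℂ} (hz : ‖z‖ < 1) : qPochInf q z ≠ 0 := by
  simpa [qPochInf, ← sub_eq_add_neg] using tprod_one_add_ne_zero_of_summable
    (fun j => by simpa [← sub_eq_add_neg] using one_sub_mul_pow_ne_zero hz hq.le j)
    (summable_norm_neg_mul_pow hq z)

lemma phi11Term_succ (hq : ‖q‖ < 1) (a z : ℂ) (m : ℕ) :
    phi11Term q a z (m + 1) =
      -(q ^ m * (1 - a * q ^ m) * z) / (1 - q * q ^ m) * phi11Term q a z m := by
  have h1 := qPoch_ne_zero hq hq.le m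
  have h2 := one_sub_mul_pow_ne_zero hq hq.le m
  have hchoose : (m + 1).choose 2 = m + m.choose 2 := by
    rw [Nat.choose_succ_succ', Nat.choose_one_right]
  rw [phi11Term, phi11Term, qPoch_succ, qPoch_succ, hchoose, pow_add, pow_succ]
  field_simp
  ring

lemma cauchyTerm_succ (hq : ‖q‖ < 1) (x y u : ℂ) (m : ℕ) :
    cauchyTerm q x y u (m + 1) =
      (x - q ^ m * y) * u / (1 - q * q ^ m) * cauchyTerm q x y u m := by
  have h1 := qPoch_ne_zero hq hq.le m
  have h2 := one_sub_mul_pow_ne_zero hq hq.le m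
  rw [cauchyTerm, cauchyTerm, cauchyP_succ, qPoch_succ, pow_succ]
  field_simp

lemma summable_norm_phi11Term (hq : ‖q‖ < 1) (a z : ℂ) : Summable (‖phi11Term q a z ·‖) := by
  refine summable_norm_of_succ_eq_mul (L := 0) (by simp) ?_ (phi11Term_succ hq a z)
  have hcont : ContinuousAt (fun w : ℂ => -(w * (1 - a * w) * z) / (1 - q * w)) 0 :=
    ContinuousAt.div (by fun_prop) (by fun_prop) (by simp)
  simpa [Function.comp_def] using
    hcont.tendsto.comp (tendsto_pow_atTop_nhds_zero_of_norm_lt_one hq)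

lemma summable_norm_cauchyTerm (hq : ‖q‖ < 1) {x u : ℂ} (hxu : ‖x * u‖ < 1) (y : ℂ) :
    Summable (‖cauchyTerm q x y u ·‖) := by
  refine summable_norm_of_succ_eq_mul hxu ?_ (cauchyTerm_succ hq x y u)
  have hcont : ContinuousAt (fun w : ℂ => (x - w * y) * u / (1 - q * w)) 0 :=
    ContinuousAt.div (by fun_prop) (by fun_prop) (by simp)
  simpa [Function.comp_def] using
    hcont.tendsto.comp (tendsto_pow_atTop_nhds_zero_of_norm_lt_one hq)

lemma norm_qpow_mul_le (hq : ‖q‖ ≤ 1) (N : ℕ) (u : ℂ) : ‖q ^ N * u‖ ≤ ‖u‖ := by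
  rw [norm_mul, norm_pow]
  exact mul_le_of_le_one_left (norm_nonneg _) (pow_le_one₀ (norm_nonneg _) hq)

lemma norm_mul_qpow_mul_lt (hq : ‖q‖ ≤ 1) {x u : ℂ} (hxu : ‖x * u‖ < 1) (N : ℕ) :
    ‖x * (q ^ N * u)‖ < 1 := by
  rw [mul_left_comm]
  exact (norm_qpow_mul_le hq N _).trans_lt hxu

lemma cauchyTerm_succ_sub (hq : ‖q‖ < 1) (x y u : ℂ) (m : ℕ) :
    cauchyTerm q x y u (m + 1) - cauchyTerm q x y (q * u) (m + 1) =
      u * (x * cauchyTerm q x y u m - y * cauchyTerm q x y (q * u) m) := by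
  have hscale : ∀ k, cauchyTerm q x y (q * u) k = q ^ k * cauchyTerm q x y u k := by
    intro k
    rw [cauchyTerm, cauchyTerm, mul_pow]
    ring
  have h2 := one_sub_mul_pow_ne_zero hq hq.le m
  rw [cauchyTerm_succ hq, cauchyTerm_succ hq, hscale, div_mul_eq_mul_div, div_mul_eq_mul_div,
    div_sub_div_same, div_eq_iff h2]
  ring

lemma one_sub_mul_mul_cauchySeries (hq : ‖q‖ < 1) {x u : ℂ} (hxu : ‖x * u‖ < 1) (y : ℂ) :
    (1 - x * u) * cauchySeries q x y u = (1 - y * u) * cauchySeries q x y (q * u) := by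
  have hf := (summable_norm_cauchyTerm hq hxu y).of_norm
  have hg := (summable_norm_cauchyTerm hq
    (by simpa only [pow_one] using norm_mul_qpow_mul_lt hq.le hxu 1) y).of_norm
  have h0 : cauchyTerm q x y u 0 - cauchyTerm q x y (q * u) 0 = 0 := by
    simp [cauchyTerm, cauchyP, qPoch]
  have hdiff : cauchySeries q x y u - cauchySeries q x y (q * u) =
      u * (x * cauchySeries q x y u - y * cauchySeries q x y (q * u)) := by
    rw [cauchySeries, cauchySeries, ← hf.tsum_sub hg, (hf.sub hg).tsum_eq_zero_add, h0, zero_add]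
    simp_rw [cauchyTerm_succ_sub hq]
    rw [tsum_mul_left, (hf.mul_left x).tsum_sub (hg.mul_left y), tsum_mul_left, tsum_mul_left]
  linear_combination hdiff

lemma qPoch_mul_cauchySeries (hq : ‖q‖ < 1) {x u : ℂ} (hxu : ‖x * u‖ < 1) (y : ℂ) (N : ℕ) :
    qPoch q (x * u) N * cauchySeries q x y u =
      qPoch q (y * u) N * cauchySeries q x y (q ^ N * u) := by
  induction N with
  | zero => simp [qPoch]
  | succ N ih =>
    have step := one_sub_mul_mul_cauchySeries hq (norm_mul_qpow_mul_lt hq.le hxu N) y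
    rw [← mul_assoc q, ← pow_succ'] at step
    rw [qPoch_succ, qPoch_succ, mul_right_comm, ih]
    linear_combination qPoch q (y * u) N * step

lemma tendsto_cauchySeries_qpow_mul (hq : ‖q‖ < 1) {x u : ℂ} (hxu : ‖x * u‖ < 1) (y : ℂ) :
    Tendsto (fun N => cauchySeries q x y (q ^ N * u)) atTop (𝓝 1) := by
  have hlim : ∀ m, Tendsto (fun N => cauchyTerm q x y (q ^ N * u) m) atTop
      (𝓝 (if m = 0 then 1 else 0)) := by
    intro m
    rcases eq_or_ne m 0 with rfl | hm
    · simp [cauchyTerm, cauchyP, qPoch]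
    have hcont : Continuous fun w => cauchyTerm q x y w m := by
      unfold cauchyTerm; fun_prop
    have := hcont.tendsto 0 |>.comp
      (by simpa using (tendsto_pow_atTop_nhds_zero_of_norm_lt_one hq).mul_const u)
    simpa [cauchyTerm, hm, Function.comp_def] using this
  have hbound : ∀ N m, ‖cauchyTerm q x y (q ^ N * u) m‖ ≤ ‖cauchyTerm q x y u m‖ := by
    intro N m
    rw [cauchyTerm, cauchyTerm, norm_div, norm_div, norm_mul, norm_mul, norm_pow, norm_pow]
    gcongr
    exact norm_qpow_mul_le hq.le N u
  simpa only [cauchySeries, tsum_ite_eq] using tendsto_tsum_of_dominated_convergence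
    (summable_norm_cauchyTerm hq hxu y) hlim (Eventually.of_forall hbound)

lemma cauchySeries_eq_qPochInf_div (hq : ‖q‖ < 1) {x u : ℂ} (hxu : ‖x * u‖ < 1) (y : ℂ) :
    cauchySeries q x y u = qPochInf q (y * u) / qPochInf q (x * u) := by
  have hleft := (tendsto_qPoch hq (x * u)).mul_const (cauchySeries q x y u)
  have hright := (tendsto_qPoch hq (y * u)).mul (tendsto_cauchySeries_qpow_mul hq hxu y)
  simp_rw [← qPoch_mul_cauchySeries hq hxu y] at hright
  rw [eq_div_iff (qPochInf_ne_zero hq hxu), mul_comm, tendsto_nhds_unique hleft hright, mul_one]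

lemma hahn_mul_pow_div_qPoch (hq : ‖q‖ < 1) (x y a b t : ℂ) (n : ℕ) :
    hahn q x y a b n * t ^ n / qPoch q q n =
      ∑ kl ∈ antidiagonal n, phi11Term q a (b * t) kl.1 * cauchyTerm q y x t kl.2 := by
  rw [Nat.sum_antidiagonal_eq_sum_range_succ_mk, hahn, sum_mul, sum_div]
  refine sum_congr rfl fun k hk => ?_
  have ht : t ^ n = t ^ k * t ^ (n - k) := by
    rw [← pow_add, Nat.add_sub_cancel' (Nat.lt_succ_iff.mp (mem_range.mp hk))]
  have h0 := qPoch_ne_zero hq hq.le n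
  have h1 := qPoch_ne_zero hq hq.le k
  have h2 := qPoch_ne_zero hq hq.le (n - k)
  rw [phi11Term, cauchyTerm, qBinom, ht]
  field_simp
  ring

end

theorem stmt17_general (q : ℝ) (hq0 : 0 < q) (hq1 : q < 1) (a b x y t : ℂ)
    (hyt : ‖y * t‖ < 1) :
    ∑' n : ℕ, hahn (q : ℂ) x y a b n * t ^ n / qPoch (q : ℂ) (q : ℂ) n =
      qPochInf (q : ℂ) (x * t) / qPochInf (q : ℂ) (y * t) * phi11 (q : ℂ) a (b * t) := by
  have hq : ‖(q : ℂ)‖ < 1 := by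
    rwa [Complex.norm_real, Real.norm_of_nonneg hq0.le]
  simp_rw [hahn_mul_pow_div_qPoch hq]
  rw [← tsum_mul_tsum_eq_tsum_sum_antidiagonal_of_summable_norm
    (summable_norm_phi11Term hq a (b * t)) (summable_norm_cauchyTerm hq hyt x), ← cauchySeries,
    cauchySeries_eq_qPochInf_div hq hyt, mul_comm]
  rfl

theorem stmt17 (q : ℝ) (hq0 : 0 < q) (hq1 : q < 1) (a b x y t : ℂ)
    (hyt : ‖y * t‖ < 1) (hxt : ‖x * t‖ < 1) :
    ∑' n : ℕ, hahn (q : ℂ) x y a b n * t ^ n / qPoch (q : ℂ) (q : ℂ) n =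
      qPochInf (q : ℂ) (x * t) / qPochInf (q : ℂ) (y * t) * phi11 (q : ℂ) a (b * t) :=
  stmt17_general q hq0 hq1 a b x y t hyt
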